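/- Let ψ: 𝔻 → ℂ be analytic and not identically zero, φ a nonconstant analytic self-map of 𝔻, n ≥ 1, and suppose D_{ψ,φ,n} is bounded and coposinormal on H²(𝔻). Then ψ(w) ≠ 0 for every w ∈ 𝔻 \ {0}. -/

import Mathlib

open Complex Metric
open scoped InnerProductSpace

noncomputable section

/-- The Hardy space `H²(𝔻)`, modeled as the Hilbert space of square-summable
Taylor coefficient sequences. -/
abbrev H2 : Type := lp (fun _ : ℕ => ℂ) 2

/-- The analytic function on the unit disk represented by an element of `H²`. -/
noncomputable def H2.toFun (f : H2) (z : ℂ) : ℂ := ∑' k, f k * z ^ k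

/-- `T` is posinormal if `T T* = T* P T` for some positive operator `P`. -/
def Posinormal {H : Type*} [NormedAddCommGroup H] [InnerProductSpace ℂ H] [CompleteSpace H]
    (T : H →L[ℂ] H) : Prop :=
  ∃ P : H →L[ℂ] H, P.IsPositive ∧
    T ∘L ContinuousLinearMap.adjoint T = ContinuousLinearMap.adjoint T ∘L P ∘L T

/-- `T` realizes the weighted composition-differentiation operator `D_{ψ,φ,n}` on `H²`. -/
def IsWCD (ψ φ : ℂ → ℂ) (n : ℕ) (T : H2 →L[ℂ] H2) : Prop :=
  ∀ f : H2, ∀ z ∈ ball (0 : ℂ) 1,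
    H2.toFun (T f) z = ψ z * iteratedDeriv n (H2.toFun f) (φ z)

/-
If `ψ(w) = 0` with `w ≠ 0`, the reproducing kernel `K_w` lies in `ker D*`, since
`⟪K_w, D f⟫ = (D f)(w) = ψ(w) f⁽ⁿ⁾(φ w) = 0`. Coposinormality gives `ker D* ⊆ ker D`, so
`D K_w = 0`. But `K_w⁽ⁿ⁾(u) = n! w̄ⁿ (1 - w̄ u)⁻⁽ⁿ⁺¹⁾` never vanishes, so `(D K_w)(z) ≠ 0` at any
`z` with `ψ(z) ≠ 0`.
-/

open ComplexConjugate Topology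

open ContinuousLinearMap in
theorem Posinormal.ker_le_ker_adjoint {H : Type*} [NormedAddCommGroup H] [InnerProductSpace ℂ H]
    [CompleteSpace H] {T : H →L[ℂ] H} (hT : Posinormal T) : T.ker ≤ (adjoint T).ker := by
  obtain ⟨P, -, hP⟩ := hT
  intro x hx
  rw [← ker_self_comp_adjoint, hP]
  simp_all

theorem iteratedDeriv_inv_one_sub_mul {𝕜 : Type*} [NontriviallyNormedField 𝕜] (a z : 𝕜) (m : ℕ) :
    iteratedDeriv m (fun u => (1 - a * u)⁻¹) z =
      Nat.factorial m * a ^ m * ((1 - a * z) ^ (m + 1))⁻¹ := by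
  have h := congrFun (iter_deriv_inv_linear m (-a) 1) z
  simp only [neg_mul, ← sub_eq_neg_add] at h
  have hsign : ((-1 : 𝕜) ^ m * (-1) ^ m) = 1 := by rw [← mul_pow]; simp
  rw [iteratedDeriv_eq_iterate, h, show (-1 - m : ℤ) = -((m + 1 : ℕ) : ℤ) by push_cast; ring,
    zpow_neg, zpow_natCast, neg_pow a]
  linear_combination (Nat.factorial m * a ^ m * ((1 - a * z) ^ (m + 1))⁻¹) * hsign

theorem memℓp_two_pow {a : ℂ} (ha : ‖a‖ < 1) : Memℓp (fun k : ℕ => a ^ k) 2 := by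
  refine memℓp_gen ((summable_geometric_of_lt_one (by positivity) (pow_lt_one₀ (norm_nonneg a)
    ha two_ne_zero)).congr fun k => ?_)
  rw [norm_pow, ENNReal.toReal_ofNat, Real.rpow_two, ← pow_mul, ← pow_mul, mul_comm]

theorem norm_conj_mul_lt_one {w z : ℂ} (hw : w ∈ ball (0 : ℂ) 1) (hz : z ∈ ball (0 : ℂ) 1) :
    ‖conj w * z‖ < 1 := by
  rw [mem_ball_zero_iff] at hw hz
  rw [norm_mul, RCLike.norm_conj]
  exact mul_lt_one_of_nonneg_of_lt_one_left (norm_nonneg w) hw hz.le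

namespace H2

@[simp]
theorem toFun_zero (z : ℂ) : H2.toFun 0 z = 0 := by
  simp [H2.toFun]

def kernel (w : ℂ) (hw : w ∈ ball (0 : ℂ) 1) : H2 :=
  ⟨fun k => conj w ^ k, memℓp_two_pow (by simpa using hw)⟩

variable {w : ℂ} (hw : w ∈ ball (0 : ℂ) 1)

theorem inner_kernel (g : H2) : ⟪kernel w hw, g⟫_ℂ = g.toFun w := by
  rw [lp.inner_eq_tsum, H2.toFun]
  refine tsum_congr fun k => ?_
  simp [kernel, mul_comm]

theorem toFun_kernel {z : ℂ} (hz : z ∈ ball (0 : ℂ) 1) :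
    (kernel w hw).toFun z = (1 - conj w * z)⁻¹ := by
  rw [H2.toFun, ← tsum_geometric_of_norm_lt_one (norm_conj_mul_lt_one hw hz)]
  exact tsum_congr fun k => by simp [kernel, mul_pow]

theorem iteratedDeriv_toFun_kernel (m : ℕ) {z : ℂ} (hz : z ∈ ball (0 : ℂ) 1) :
    iteratedDeriv m (kernel w hw).toFun z =
      Nat.factorial m * conj w ^ m * ((1 - conj w * z) ^ (m + 1))⁻¹ := by
  have hK : (kernel w hw).toFun =ᶠ[𝓝 z] fun u => (1 - conj w * u)⁻¹ :=
    Filter.eventually_of_mem (isOpen_ball.mem_nhds hz) fun _ => toFun_kernel hw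
  rw [(hK.iteratedDeriv m).eq_of_nhds, iteratedDeriv_inv_one_sub_mul]

end H2

namespace IsWCD

variable {ψ φ : ℂ → ℂ} {n : ℕ} {T : H2 →L[ℂ] H2} (hT : IsWCD ψ φ n T)
  {w : ℂ} (hw : w ∈ ball (0 : ℂ) 1)
include hT

theorem adjoint_kernel_eq_zero (hψw : ψ w = 0) :
    ContinuousLinearMap.adjoint T (H2.kernel w hw) = 0 := by
  rw [← inner_self_eq_zero (𝕜 := ℂ), ContinuousLinearMap.adjoint_inner_left, H2.inner_kernel,
    hT _ w hw, hψw, zero_mul]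

theorem apply_kernel_ne_zero (hw0 : w ≠ 0) {z : ℂ} (hz : z ∈ ball (0 : ℂ) 1)
    (hφz : φ z ∈ ball (0 : ℂ) 1) (hψz : ψ z ≠ 0) : T (H2.kernel w hw) ≠ 0 := by
  intro hTK
  have hden : 1 - conj w * φ z ≠ 0 :=
    sub_ne_zero.mpr fun h => by simpa [← h] using norm_conj_mul_lt_one hw hφz
  have h := hT (H2.kernel w hw) z hz
  rw [hTK, H2.toFun_zero, H2.iteratedDeriv_toFun_kernel hw n hφz] at h
  exact mul_ne_zero hψz (by simp [hw0, hden, Nat.factorial_ne_zero]) h.symm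

end IsWCD

theorem stmt11_general (ψ φ : ℂ → ℂ)
    (hψ0 : ∃ z ∈ ball (0 : ℂ) 1, ψ z ≠ 0)
    (hφm : ∀ z ∈ ball (0 : ℂ) 1, φ z ∈ ball (0 : ℂ) 1)
    (n : ℕ)
    (T : H2 →L[ℂ] H2) (hT : IsWCD ψ φ n T)
    (hcopos : Posinormal (ContinuousLinearMap.adjoint T)) :
    ∀ w ∈ ball (0 : ℂ) 1, w ≠ 0 → ψ w ≠ 0 := by
  intro w hw hw0 hψw
  obtain ⟨z, hz, hψz⟩ := hψ0
  have hK_ker_adjoint := hT.adjoint_kernel_eq_zero hw hψw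
  have hK_ker : T (H2.kernel w hw) = 0 := by
    simpa using hcopos.ker_le_ker_adjoint hK_ker_adjoint
  exact hT.apply_kernel_ne_zero hw hw0 hz (hφm z hz) hψz hK_ker

/-- If `D_{ψ,φ,n}` is bounded and coposinormal, then `ψ(w) ≠ 0` for all `w ∈ 𝔻 \\ {0}`. -/
theorem stmt11 (ψ φ : ℂ → ℂ)
    (hψ : DifferentiableOn ℂ ψ (ball (0 : ℂ) 1))
    (hψ0 : ∃ z ∈ ball (0 : ℂ) 1, ψ z ≠ 0)
    (hφ : DifferentiableOn ℂ φ (ball (0 : ℂ) 1))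
    (hφm : ∀ z ∈ ball (0 : ℂ) 1, φ z ∈ ball (0 : ℂ) 1)
    (hφnc : ¬ ∃ c : ℂ, ∀ z ∈ ball (0 : ℂ) 1, φ z = c)
    (n : ℕ) (hn : 1 ≤ n)
    (T : H2 →L[ℂ] H2) (hT : IsWCD ψ φ n T)
    (hcopos : Posinormal (ContinuousLinearMap.adjoint T)) :
    ∀ w ∈ ball (0 : ℂ) 1, w ≠ 0 → ψ w ≠ 0 :=
  stmt11_general ψ φ hψ0 hφm n T hT hcopos
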